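/- Let α ∈ Φ and let α_i ≠ α_j be distinct simple roots such that α + α_i ∈ Φ, α − α_j ∈ Φ, and α + α_i − α_j ∈ Φ. Then m_i^−(α − α_j) · m_j^+(α) = m_j^+(α + α_i) · m_i^−(α), where for a root β ≠ ±γ with γ-string β − qγ, ..., β + pγ through β one sets m_γ^+(β) = p + 1 and m_γ^−(β) = q + 1. -/

import Mathlib

noncomputable section

variable {E : Type*} [AddCommGroup E] [Module ℚ E]

/-- The Cartan pairing `(β, α^∨) = 2(β,α)/(α,α)`. -/
def pairingB (B : E →ₗ[ℚ] E →ₗ[ℚ] ℚ) (β α : E) : ℚ := 2 * B β α / B α α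

/-- A reduced crystallographic root system in a ℚ-vector space with a
positive-definite symmetric bilinear form. -/
structure IsRootSystem (B : E →ₗ[ℚ] E →ₗ[ℚ] ℚ) (Φ : Set E) : Prop where
  finite : Φ.Finite
  ne_zero : ∀ α ∈ Φ, α ≠ 0
  symm : ∀ x y : E, B x y = B y x
  posdef : ∀ x : E, x ≠ 0 → 0 < B x x
  reduced : ∀ α ∈ Φ, ∀ t : ℚ, t • α ∈ Φ → t = 1 ∨ t = -1
  cryst : ∀ α ∈ Φ, ∀ β ∈ Φ, ∃ n : ℤ, pairingB B β α = n
  reflMem : ∀ α ∈ Φ, ∀ β ∈ Φ, β - pairingB B β α • α ∈ Φ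

/-- Irreducibility: no nontrivial orthogonal decomposition of `Φ`. -/
def IsIrreducibleRS (B : E →ₗ[ℚ] E →ₗ[ℚ] ℚ) (Φ : Set E) : Prop :=
  ∀ s : Set E, s ⊆ Φ → s.Nonempty →
    (∀ α ∈ s, ∀ β ∈ Φ, β ∉ s → B α β = 0) → Φ ⊆ s

/-- `RootChain Φ γ β p q` says that the `γ`-string through `β` is
`β - qγ, ..., β, ..., β + pγ`. -/
def RootChain (Φ : Set E) (γ β : E) (p q : ℕ) : Prop :=
  (∀ k : ℤ, -(q : ℤ) ≤ k → k ≤ (p : ℤ) → β + (k : ℚ) • γ ∈ Φ) ∧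
  β - ((q : ℚ) + 1) • γ ∉ Φ ∧ β + ((p : ℚ) + 1) • γ ∉ Φ

/-- A set of simple roots `α_i = a i`, indexed by a finite set `I`. -/
structure IsBase {I : Type*} [Fintype I] (Φ : Set E) (a : I → E) : Prop where
  mem : ∀ i, a i ∈ Φ
  indep : LinearIndependent ℚ a
  posneg : ∀ β ∈ Φ, (∃ c : I → ℕ, β = ∑ i, (c i : ℚ) • a i) ∨
    (∃ c : I → ℕ, β = -∑ i, (c i : ℚ) • a i)

/-
Write `u = α_i`, `v = α_j`. As `u - v` is not a root, `(u, v) ≤ 0`.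

If `(u, v) = 0`, then `u + v` is not a root either, and for such an orthogonal pair any root `β`
with `β - u, β - v ∈ Φ` has `β - u - v ∈ Φ`. Hence the `u`-strings through `α` and `α - v` start
at the same place, and the `v`-strings through `α` and `α + u` end at the same place:
`q₁ = q₄` and `p₂ = p₃`.

If `(u, v) < 0`, then `u + v` is a root. Checking the Cartan integers of the roots
`α, α + u, α - v, α + u - v, u, v, u + v` shows that `u` and `v` have the same length and
`(α, u + v) = 0`. The reflection in `u + v` then fixes `α` and sends `u` to `-v`, so it maps the
`u`-strings through `α - v` and `α` onto the reversed `v`-strings through `α + u` and `α`: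
`q₁ = p₃` and `q₄ = p₂`.
-/

namespace IsRootSystem

variable {B : E →ₗ[ℚ] E →ₗ[ℚ] ℚ} {Φ : Set E} {x y β δ : E}

theorem inner_self_pos (hRS : IsRootSystem B Φ) (hx : x ∈ Φ) : 0 < B x x :=
  hRS.posdef x (hRS.ne_zero x hx)

theorem pairingB_eq (hRS : IsRootSystem B Φ) (hy : y ∈ Φ) {n : ℚ}
    (h : 2 * B x y = n * B y y) : pairingB B x y = n := by
  rw [pairingB, h, mul_div_cancel_right₀ _ (hRS.inner_self_pos hy).ne']

theorem exists_two_mul_inner_eq (hRS : IsRootSystem B Φ) (hx : x ∈ Φ) (hy : y ∈ Φ) :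
    ∃ n : ℤ, 2 * B x y = n * B y y := by
  obtain ⟨n, hn⟩ := hRS.cryst y hy x hx
  exact ⟨n, by rw [← hn, pairingB, div_mul_cancel₀ _ (hRS.inner_self_pos hy).ne']⟩

theorem neg_mem (hRS : IsRootSystem B Φ) (hx : x ∈ Φ) : -x ∈ Φ := by
  have h := hRS.reflMem x hx x hx
  rwa [hRS.pairingB_eq hx (n := 2) rfl, two_smul, sub_add_cancel_left] at h

theorem ne_of_add_mem (hRS : IsRootSystem B Φ) (hx : x ∈ Φ) (hxy : x + y ∈ Φ) : x ≠ y := by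
  rintro rfl
  rcases hRS.reduced x hx 2 (by rwa [two_smul]) with h | h <;> norm_num at h

theorem ne_neg_of_add_mem (hRS : IsRootSystem B Φ) (hxy : x + y ∈ Φ) : x ≠ -y := by
  rintro rfl
  exact hRS.ne_zero _ hxy (neg_add_cancel y)

theorem sq_inner_lt (hRS : IsRootSystem B Φ) (hx : x ∈ Φ) (hy : y ∈ Φ) (h1 : x ≠ y)
    (h2 : x ≠ -y) : B x y ^ 2 < B x x * B y y := by
  have hyy := hRS.inner_self_pos hy
  have hz : B y y • x - B x y • y ≠ 0 := by
    intro h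
    have hxe : x = (B x y / B y y) • y := by
      rw [div_eq_inv_mul, mul_smul, ← sub_eq_zero.mp h, smul_smul, inv_mul_cancel₀ hyy.ne',
        one_smul]
    rcases hRS.reduced y hy _ (hxe ▸ hx) with h' | h'
    · exact h1 (by rw [hxe, h', one_smul])
    · exact h2 (by rw [hxe, h', neg_one_smul])
  have hpos := hRS.posdef _ hz
  simp only [map_sub, map_smul, LinearMap.sub_apply, LinearMap.smul_apply, smul_eq_mul,
    hRS.symm y x] at hpos
  nlinarith

theorem cartan_mul_bounds (hRS : IsRootSystem B Φ) (hx : x ∈ Φ) (hy : y ∈ Φ) (h1 : x ≠ y)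
    (h2 : x ≠ -y) {n m : ℤ} (hn : 2 * B x y = n * B y y) (hm : 2 * B x y = m * B x x) :
    0 ≤ n * m ∧ n * m < 4 := by
  have hP := mul_pos (hRS.inner_self_pos hy) (hRS.inner_self_pos hx)
  have key : ((n * m : ℤ) : ℚ) * (B y y * B x x) = 4 * B x y ^ 2 := by
    push_cast
    linear_combination (-2 * B x y) * hn + (-(n : ℚ) * B y y) * hm
  have hcs := hRS.sq_inner_lt hx hy h1 h2
  constructor
  · have : (0 : ℚ) * (B y y * B x x) ≤ ((n * m : ℤ) : ℚ) * (B y y * B x x) := by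
      rw [key, zero_mul]; positivity
    exact_mod_cast le_of_mul_le_mul_right this hP
  · have : ((n * m : ℤ) : ℚ) * (B y y * B x x) < 4 * (B y y * B x x) := by
      rw [key, mul_comm (B y y)]; linarith
    exact_mod_cast lt_of_mul_lt_mul_right this hP.le

theorem abs_le_three (hRS : IsRootSystem B Φ) (hx : x ∈ Φ) (hy : y ∈ Φ) (h1 : x ≠ y)
    (h2 : x ≠ -y) {n : ℤ} (hn : 2 * B x y = n * B y y) : |n| ≤ 3 := by
  obtain ⟨m, hm⟩ := hRS.exists_two_mul_inner_eq hy hx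
  rw [hRS.symm y x] at hm
  obtain ⟨hnm0, hnm3⟩ := hRS.cartan_mul_bounds hx hy h1 h2 hn hm
  rcases eq_or_ne m 0 with rfl | hm0
  · have : (n : ℚ) * B y y = 0 := by rw [← hn, hm]; simp
    rcases mul_eq_zero.mp this with h | h
    · simp [Int.cast_eq_zero.mp h]
    · exact absurd h (hRS.inner_self_pos hy).ne'
  · calc |n| ≤ |n| * |m| := le_mul_of_one_le_right (abs_nonneg n) (Int.one_le_abs hm0)
      _ = n * m := by rw [← abs_mul, abs_of_nonneg hnm0]
      _ ≤ 3 := by omega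

theorem le_one_of_add_mem (hRS : IsRootSystem B Φ) (hx : x ∈ Φ) (hy : y ∈ Φ)
    (hxy : x + y ∈ Φ) {n : ℤ} (hn : 2 * B x y = n * B y y) : n ≤ 1 := by
  have hx' : x + y + -y ∈ Φ := by rwa [add_neg_cancel_right]
  have hn2 : 2 * B (x + y) y = ((n + 2 : ℤ) : ℚ) * B y y := by
    push_cast
    simp only [map_add, LinearMap.add_apply]
    linear_combination hn
  have h := hRS.abs_le_three hxy hy (by simpa using hRS.ne_neg_of_add_mem hx')
    (hRS.ne_of_add_mem hxy hx') hn2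
  have := (abs_le.mp h).2
  omega

theorem neg_one_le_of_sub_mem (hRS : IsRootSystem B Φ) (hx : x ∈ Φ) (hy : y ∈ Φ)
    (hxy : x - y ∈ Φ) {n : ℤ} (hn : 2 * B x y = n * B y y) : -1 ≤ n := by
  have := hRS.le_one_of_add_mem hx (hRS.neg_mem hy) (by rwa [← sub_eq_add_neg]) (n := -n)
    (by simp only [map_neg, LinearMap.neg_apply, neg_neg]; push_cast; linear_combination -hn)
  omega

theorem sub_mem_of_pos (hRS : IsRootSystem B Φ) (hx : x ∈ Φ) (hy : y ∈ Φ) (hne : x ≠ y)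
    (hpos : 0 < B x y) : x - y ∈ Φ := by
  have hyy := hRS.inner_self_pos hy
  have hne' : x ≠ -y := by
    rintro rfl
    simp only [map_neg, LinearMap.neg_apply] at hpos
    linarith
  obtain ⟨n, hn⟩ := hRS.exists_two_mul_inner_eq hx hy
  obtain ⟨m, hm⟩ := hRS.exists_two_mul_inner_eq hy hx
  rw [hRS.symm y x] at hm
  have hn1 : 0 < n := by
    have : (0 : ℚ) < n := pos_of_mul_pos_left (hn ▸ by linarith) hyy.le
    exact_mod_cast this
  have hm1 : 0 < m := by
    have : (0 : ℚ) < m := pos_of_mul_pos_left (hm ▸ by linarith) (hRS.inner_self_pos hx).le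
    exact_mod_cast this
  have hnm := (hRS.cartan_mul_bounds hx hy hne hne' hn hm).2
  obtain rfl | rfl : n = 1 ∨ m = 1 := by
    by_contra! h
    have : 2 ≤ n := by omega
    have : 2 ≤ m := by omega
    nlinarith
  · simpa [hRS.pairingB_eq hy hn] using hRS.reflMem y hy x hx
  · have h := hRS.reflMem x hx y hy
    rw [hRS.pairingB_eq hx (by rw [hRS.symm y x, hm])] at h
    simpa using hRS.neg_mem h

theorem add_mem_of_neg (hRS : IsRootSystem B Φ) (hx : x ∈ Φ) (hy : y ∈ Φ) (hne : x ≠ -y)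
    (hneg : B x y < 0) : x + y ∈ Φ := by
  simpa using hRS.sub_mem_of_pos hx (hRS.neg_mem hy) hne (by simpa using hneg)

theorem not_between (hRS : IsRootSystem B Φ) (hx : x ∈ Φ) (hy : y ∈ Φ) (k : ℤ)
    (hlo : k * B y y < 2 * B x y) (hhi : 2 * B x y < (k + 1) * B y y) : False := by
  obtain ⟨n, hn⟩ := hRS.exists_two_mul_inner_eq hx hy
  have hyy := hRS.inner_self_pos hy
  rw [hn] at hlo hhi
  have h1 : (k : ℚ) < n := lt_of_mul_lt_mul_right hlo hyy.le
  have h2 : (n : ℚ) < k + 1 := lt_of_mul_lt_mul_right hhi hyy.le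
  norm_cast at h1 h2
  omega

theorem two_mul_inner_eq_neg_of_neg (hRS : IsRootSystem B Φ) (hx : x ∈ Φ) (hy : y ∈ Φ)
    (hne : x ≠ -y) (hneg : B x y < 0) : 2 * B x y = -B x x ∨ 2 * B x y = -B y y := by
  have hne' : x ≠ y := by
    rintro rfl
    linarith [hRS.inner_self_pos hx]
  obtain ⟨n, hn⟩ := hRS.exists_two_mul_inner_eq hx hy
  obtain ⟨m, hm⟩ := hRS.exists_two_mul_inner_eq hy hx
  rw [hRS.symm y x] at hm
  have hn1 : n < 0 := by
    have : (n : ℚ) < 0 := neg_of_mul_neg_left (hn ▸ by linarith) (hRS.inner_self_pos hy).le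
    exact_mod_cast this
  have hm1 : m < 0 := by
    have : (m : ℚ) < 0 := neg_of_mul_neg_left (hm ▸ by linarith) (hRS.inner_self_pos hx).le
    exact_mod_cast this
  have hnm := (hRS.cartan_mul_bounds hx hy hne' hne hn hm).2
  obtain rfl | rfl : n = -1 ∨ m = -1 := by
    by_contra! h
    have : n ≤ -2 := by omega
    have : m ≤ -2 := by omega
    nlinarith
  · right; rw [hn]; push_cast; ring
  · left; rw [hm]; push_cast; ring

theorem add_notMem_of_orthogonal (hRS : IsRootSystem B Φ) (hy : y ∈ Φ) (hxy : B x y = 0)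
    (hsub : x - y ∉ Φ) : x + y ∉ Φ := by
  intro h
  have hpair : pairingB B (x + y) y = 2 := hRS.pairingB_eq hy (by simp [hxy])
  have := hRS.reflMem y hy _ h
  rw [hpair, two_smul, add_sub_add_right_eq_sub] at this
  exact hsub this

theorem sub_sub_mem_of_inner_pos (hRS : IsRootSystem B Φ) (hy : y ∈ Φ) (hxy : B x y = 0)
    (hadd : x + y ∉ Φ) (hβ : β ∈ Φ) (hβx : β - x ∈ Φ) (hpos : 0 < B β y) : β - x - y ∈ Φ := by
  refine hRS.sub_mem_of_pos hβx hy ?_ (by simpa [hxy] using hpos)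
  rintro rfl
  exact hadd (by rwa [add_sub_cancel])

theorem sub_sub_mem_of_orthogonal (hRS : IsRootSystem B Φ) (hx : x ∈ Φ) (hy : y ∈ Φ)
    (hxy : B x y = 0) (hadd : x + y ∉ Φ) (hsub : x - y ∉ Φ) (hβ : β ∈ Φ) (hβx : β - x ∈ Φ)
    (hβy : β - y ∈ Φ) : β - x - y ∈ Φ := by
  have hyx : B y x = 0 := by rw [hRS.symm, hxy]
  by_cases hby : 0 < B β y
  · exact hRS.sub_sub_mem_of_inner_pos hy hxy hadd hβ hβx hby
  by_cases hbx : 0 < B β x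
  · rw [sub_right_comm]
    exact hRS.sub_sub_mem_of_inner_pos hx hyx (by rwa [add_comm]) hβ hβy hbx
  -- otherwise `β - x` and `β - y` make an acute angle, forcing `y - x` to be a root
  have hne : β - x ≠ β - y := by
    intro h
    rw [sub_right_inj.mp h] at hxy
    exact (hRS.inner_self_pos hy).ne' hxy
  have hpos : 0 < B (β - x) (β - y) := by
    simp only [map_sub, LinearMap.sub_apply, hxy, hRS.symm x β]
    linarith [hRS.inner_self_pos hβ]
  have := hRS.neg_mem (hRS.sub_mem_of_pos hβx hβy hne hpos)
  rw [neg_sub, sub_sub_sub_cancel_left] at this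
  exact absurd this hsub

def reflection (hRS : IsRootSystem B Φ) (hδ : δ ∈ Φ) : E ≃ₗ[ℚ] E :=
  Module.reflection (x := δ) (f := (2 / B δ δ) • B.flip δ)
    (by simp [div_mul_cancel₀ _ (hRS.inner_self_pos hδ).ne'])

theorem reflection_apply (hRS : IsRootSystem B Φ) (hδ : δ ∈ Φ) (x : E) :
    hRS.reflection hδ x = x - pairingB B x δ • δ := by
  simp [reflection, Module.reflection_apply, pairingB, div_mul_eq_mul_div]

theorem reflection_mem_iff (hRS : IsRootSystem B Φ) (hδ : δ ∈ Φ) :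
    hRS.reflection hδ x ∈ Φ ↔ x ∈ Φ := by
  refine ⟨fun h => ?_, fun h => hRS.reflection_apply hδ x ▸ hRS.reflMem δ hδ x h⟩
  have h' := hRS.reflMem δ hδ _ h
  rwa [← hRS.reflection_apply hδ, show hRS.reflection hδ (hRS.reflection hδ x) = x from
    Module.involutive_reflection _ x] at h'

end IsRootSystem

namespace RootChain

variable {B : E →ₗ[ℚ] E →ₗ[ℚ] ℚ} {Φ : Set E} {γ β x y : E} {p q p' q' : ℕ}

theorem sub_mem (h : RootChain Φ γ β p q) {k : ℕ} (hk : k ≤ q) : β - (k : ℚ) • γ ∈ Φ := by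
  simpa [sub_eq_add_neg] using h.1 (-k) (by omega) (by omega)

theorem neg (h : RootChain Φ γ β p q) : RootChain Φ (-γ) β q p := by
  refine ⟨fun k hk₁ hk₂ => ?_, ?_, ?_⟩
  · simpa using h.1 (-k) (by omega) (by omega)
  · simpa [sub_eq_add_neg] using h.2.2
  · simpa [sub_eq_add_neg] using h.2.1

theorem map (e : E ≃ₗ[ℚ] E) (he : ∀ x, e x ∈ Φ ↔ x ∈ Φ) (h : RootChain Φ γ β p q) :
    RootChain Φ (e γ) (e β) p q := by
  refine ⟨fun k hk₁ hk₂ => ?_, ?_, ?_⟩ <;>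
    simp only [← map_smul, ← map_add, ← map_sub, he]
  exacts [h.1 k hk₁ hk₂, h.2.1, h.2.2]

theorem upper_le (h : RootChain Φ γ β p q) (h' : RootChain Φ γ β p' q') : p' ≤ p := by
  by_contra! hlt
  exact h.2.2 (by exact_mod_cast h'.1 (p + 1) (by omega) (by omega))

theorem unique (h : RootChain Φ γ β p q) (h' : RootChain Φ γ β p' q') : p = p' ∧ q = q' :=
  ⟨(h'.upper_le h).antisymm (h.upper_le h'), (h'.neg.upper_le h.neg).antisymm (h.neg.upper_le h'.neg)⟩

theorem le_of_orthogonal (hRS : IsRootSystem B Φ) (hx : x ∈ Φ) (hy : y ∈ Φ) (hxy : B x y = 0)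
    (hadd : x + y ∉ Φ) (hsub : x - y ∉ Φ) (h : RootChain Φ x β p q)
    (h' : RootChain Φ x (β - y) p' q') : q ≤ q' := by
  by_contra! hlt
  refine h'.2.1 ?_
  have := hRS.sub_sub_mem_of_orthogonal hx hy hxy hadd hsub (h.sub_mem hlt.le)
    (by simpa [sub_sub, add_smul, add_comm] using h.sub_mem (k := q' + 1) hlt)
    (by simpa [sub_right_comm] using h'.sub_mem le_rfl)
  convert this using 1
  module

theorem eq_of_orthogonal (hRS : IsRootSystem B Φ) (hx : x ∈ Φ) (hy : y ∈ Φ) (hxy : B x y = 0)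
    (hadd : x + y ∉ Φ) (hsub : x - y ∉ Φ) (h : RootChain Φ x β p q)
    (h' : RootChain Φ x (β - y) p' q') : q = q' := by
  refine (h.le_of_orthogonal hRS hx hy hxy hadd hsub h').antisymm
    (h'.le_of_orthogonal hRS hx (hRS.neg_mem hy) (by simp [hxy]) (by rwa [← sub_eq_add_neg])
      (by rwa [sub_neg_eq_add]) (by rwa [sub_neg_eq_add, sub_add_cancel]))

end RootChain

namespace IsRootSystem

variable {B : E →ₗ[ℚ] E →ₗ[ℚ] ℚ} {Φ : Set E} {α u v : E}

theorem rootChain_eq_of_orthogonal (hRS : IsRootSystem B Φ) (hu : u ∈ Φ) (hv : v ∈ Φ)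
    (huv : B u v = 0) (hsub : u - v ∉ Φ) {p1 q1 p2 q2 p3 q3 p4 q4 : ℕ}
    (hc1 : RootChain Φ u (α - v) p1 q1) (hc2 : RootChain Φ v α p2 q2)
    (hc3 : RootChain Φ v (α + u) p3 q3) (hc4 : RootChain Φ u α p4 q4) :
    q1 = q4 ∧ p2 = p3 := by
  have hadd := hRS.add_notMem_of_orthogonal hv huv hsub
  refine ⟨(hc4.eq_of_orthogonal hRS hu hv huv hadd hsub hc1).symm, ?_⟩
  refine hc2.neg.eq_of_orthogonal hRS (hRS.neg_mem hv) (hRS.neg_mem hu)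
    (by simp [hRS.symm v u, huv]) ?_ (by rwa [neg_sub_neg])
    (by rw [sub_neg_eq_add]; exact hc3.neg)
  rw [← neg_add, add_comm]
  exact fun h => hadd (by simpa using hRS.neg_mem h)

end IsRootSystem

namespace IsBase

variable {I : Type*} [Fintype I] {Φ : Set E} {a : I → E} {i j : I}

theorem sub_ne_sum (hbase : IsBase Φ a) (hij : i ≠ j) (c : I → ℕ) :
    a i - a j ≠ ∑ k, (c k : ℚ) • a k := by
  classical
  intro h
  have hsum : ∑ k, (Pi.single i 1 - Pi.single j 1 : I → ℚ) k • a k = ∑ k, (c k : ℚ) • a k := by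
    simp [sub_smul, Finset.sum_sub_distrib, Pi.single_apply, h]
  have := Fintype.linearIndependent_iffₛ.mp hbase.indep _ _ hsum j
  simp [hij] at this
  linarith [(c j).cast_nonneg (α := ℚ)]

theorem sub_notMem (hbase : IsBase Φ a) (hij : i ≠ j) : a i - a j ∉ Φ := by
  intro h
  rcases hbase.posneg _ h with ⟨c, hc⟩ | ⟨c, hc⟩
  · exact hbase.sub_ne_sum hij c hc
  · exact hbase.sub_ne_sum hij.symm c (by rw [← neg_sub, hc, neg_neg])

theorem ne_neg (hbase : IsBase Φ a) (hij : i ≠ j) : a i ≠ -a j := by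
  classical
  intro h
  have hsum : ∑ k, (Pi.single i 1 + Pi.single j 1 : I → ℚ) k • a k = ∑ k, (0 : I → ℚ) k • a k := by
    simp [add_smul, Finset.sum_add_distrib, Pi.single_apply, h]
  simpa [hij] using Fintype.linearIndependent_iffₛ.mp hbase.indep _ _ hsum i

end IsBase

structure IsRootParallelogram (Φ : Set E) (α u v : E) : Prop where
  mem : α ∈ Φ
  add_mem : α + u ∈ Φ
  sub_mem : α - v ∈ Φ
  add_sub_mem : α + u - v ∈ Φ

namespace IsRootParallelogram

variable {B : E →ₗ[ℚ] E →ₗ[ℚ] ℚ} {Φ : Set E} {α u v : E}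

set_option linter.unusedSectionVars false in
theorem swap (P : IsRootParallelogram Φ α u v) : IsRootParallelogram Φ (α + u - v) v u where
  mem := P.add_sub_mem
  add_mem := by simpa using P.add_mem
  sub_mem := by simpa [sub_sub, add_comm u] using P.sub_mem
  add_sub_mem := by simpa using P.mem

theorem neg (hRS : IsRootSystem B Φ) (P : IsRootParallelogram Φ α u v) :
    IsRootParallelogram Φ (-(α + u - v)) u v where
  mem := hRS.neg_mem P.add_sub_mem
  add_mem := by simpa [neg_add_eq_sub, sub_add] using hRS.neg_mem P.sub_mem
  sub_mem := by simpa [sub_sub] using hRS.neg_mem P.add_mem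
  add_sub_mem := by convert hRS.neg_mem P.mem using 1; abel

theorem cartan_bounds (hRS : IsRootSystem B Φ) (P : IsRootParallelogram Φ α u v) (hu : u ∈ Φ)
    (hv : v ∈ Φ) (huv : u + v ∈ Φ) {k A b : ℤ} (hU : 2 * B u v = -B u u)
    (hk : 2 * B u v = -(k * B v v)) (hA : 2 * B α u = A * B u u)
    (hb : 2 * B α v = b * B v v) :
    -3 ≤ A ∧ A ≤ 0 ∧ b ≤ 3 ∧ k - 1 ≤ b ∧ -1 ≤ A * k + b + k ∧ A * k + b + k ≤ 3 := by
  have hsu := hRS.symm v u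
  have hδ : B (u + v) (u + v) = B v v := by
    simp only [map_add, LinearMap.add_apply]
    linear_combination hsu + hU
  have hUk : B u u = k * B v v := by linear_combination hU - hk
  refine ⟨(abs_le.mp (hRS.abs_le_three P.mem hu (hRS.ne_of_add_mem P.mem P.add_mem)
      (hRS.ne_neg_of_add_mem P.add_mem) hA)).1, ?_, ?_, ?_, ?_, ?_⟩
  · have := hRS.le_one_of_add_mem P.sub_mem hu (by rw [sub_add_eq_add_sub]; exact P.add_sub_mem)
      (n := A + 1) (by
        push_cast
        simp only [map_sub, LinearMap.sub_apply]
        linear_combination hA - hU - 2 * hsu)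
    omega
  · have hαv : α + -v ∈ Φ := by rw [← sub_eq_add_neg]; exact P.sub_mem
    exact (abs_le.mp (hRS.abs_le_three P.mem hv (by simpa using hRS.ne_neg_of_add_mem hαv)
      (hRS.ne_of_add_mem P.mem hαv) hb)).2
  · have := hRS.neg_one_le_of_sub_mem P.add_mem hv P.add_sub_mem (n := b - k) (by
      push_cast
      simp only [map_add, LinearMap.add_apply]
      linear_combination hb + hk)
    omega
  · have := hRS.neg_one_le_of_sub_mem P.add_mem huv
      (by convert P.sub_mem using 1; abel) (n := A * k + b + k) (by
        rw [hδ]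
        push_cast
        simp only [map_add, LinearMap.add_apply]
        linear_combination hA + hb + hU + (A + 1) * hUk)
    omega
  · have := hRS.le_one_of_add_mem P.sub_mem huv (by rw [sub_add_add_cancel]; exact P.add_mem)
      (n := A * k + b + k - 2) (by
        rw [hδ]
        push_cast
        simp only [map_add, map_sub, LinearMap.sub_apply]
        linear_combination hA + hb - hU - 2 * hsu + (A + 1) * hUk)
    omega

theorem cartan_cases {k A b : ℤ} (hk : 0 < k) (hk3 : k ≤ 3) (hA3 : -3 ≤ A) (hA0 : A ≤ 0)
    (hb3 : b ≤ 3) (hbk : k - 1 ≤ b) (hlo : -1 ≤ A * k + b + k) (hhi : A * k + b + k ≤ 3)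
    (h : ¬(k = 1 ∧ A + b ≤ 0)) :
    (k = 1 ∧ A = 0 ∧ b = 1) ∨ (k = 1 ∧ A = 0 ∧ b = 2) ∨ (k = 1 ∧ A = -1 ∧ b = 2) ∨
    (k = 1 ∧ A = -1 ∧ b = 3) ∨ (k = 1 ∧ A = -2 ∧ b = 3) ∨
    (k = 2 ∧ A = 0 ∧ b = 1) ∨ (k = 2 ∧ A = -1 ∧ b = 1) ∨ (k = 2 ∧ A = -2 ∧ b = 1) ∨
    (k = 2 ∧ A = -1 ∧ b = 2) ∨ (k = 2 ∧ A = -2 ∧ b = 2) ∨ (k = 2 ∧ A = -1 ∧ b = 3) ∨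
    (k = 2 ∧ A = -2 ∧ b = 3) ∨ (k = 2 ∧ A = -3 ∧ b = 3) ∨
    (k = 3 ∧ A = -1 ∧ b = 2) ∨ (k = 3 ∧ A = -1 ∧ b = 3) ∨ (k = 3 ∧ A = -2 ∧ b = 2) ∨
    (k = 3 ∧ A = -2 ∧ b = 3) := by
  have hb0 : 0 ≤ b := by omega
  interval_cases k <;> interval_cases A <;> interval_cases b <;> simp_all

theorem cartan_eq_one (hRS : IsRootSystem B Φ) (P : IsRootParallelogram Φ α u v) (hu : u ∈ Φ)
    (hv : v ∈ Φ) (huv : u + v ∈ Φ) {k A b : ℤ} (hU : 2 * B u v = -B u u)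
    (hk : 2 * B u v = -(k * B v v)) (hA : 2 * B α u = A * B u u)
    (hb : 2 * B α v = b * B v v) : k = 1 ∧ A + b ≤ 0 := by
  obtain ⟨hA3, hA0, hb3, hbk, hlo, hhi⟩ := P.cartan_bounds hRS hu hv huv hU hk hA hb
  have hUk : B u u = k * B v v := by linear_combination hU - hk
  have hk3 := (abs_le.mp (hRS.abs_le_three hu hv (hRS.ne_of_add_mem hu huv)
    (hRS.ne_neg_of_add_mem huv) (n := -k) (by push_cast; linarith))).1
  have hk0 : 0 < k := by
    have : (0 : ℚ) < k :=
      pos_of_mul_pos_left (hUk ▸ hRS.inner_self_pos hu) (hRS.inner_self_pos hv).le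
    exact_mod_cast this
  by_contra hcon
  have hsu := hRS.symm u α
  have hsv := hRS.symm v α
  have hsvu := hRS.symm v u
  have hV := hRS.inner_self_pos hv
  have hN := hRS.inner_self_pos P.mem
  have hNu := hRS.inner_self_pos P.add_mem
  have hNv := hRS.inner_self_pos P.sub_mem
  simp only [map_add, map_sub, LinearMap.add_apply, LinearMap.sub_apply, hsu, hsv] at hNu hNv
  -- Each remaining triple puts the Cartan number `2 (X, Y) / (Y, Y)` of two of the roots
  -- `α, α + u, α - v, α + u - v, v, u + v` strictly between consecutive integers.
  rcases cartan_cases hk0 (by omega) hA3 hA0 hb3 hbk hlo hhi hcon with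
    ⟨rfl, rfl, rfl⟩ | ⟨rfl, rfl, rfl⟩ | ⟨rfl, rfl, rfl⟩ | ⟨rfl, rfl, rfl⟩ | ⟨rfl, rfl, rfl⟩ |
    ⟨rfl, rfl, rfl⟩ | ⟨rfl, rfl, rfl⟩ | ⟨rfl, rfl, rfl⟩ | ⟨rfl, rfl, rfl⟩ | ⟨rfl, rfl, rfl⟩ |
    ⟨rfl, rfl, rfl⟩ | ⟨rfl, rfl, rfl⟩ | ⟨rfl, rfl, rfl⟩ | ⟨rfl, rfl, rfl⟩ | ⟨rfl, rfl, rfl⟩ |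
    ⟨rfl, rfl, rfl⟩ | ⟨rfl, rfl, rfl⟩ <;>
  [refine hRS.not_between P.add_mem P.add_sub_mem 1 ?_ ?_;
   refine hRS.not_between P.mem P.add_mem 1 ?_ ?_;
   refine hRS.not_between P.mem P.add_mem 1 ?_ ?_;
   refine hRS.not_between P.mem P.add_mem 1 ?_ ?_;
   refine hRS.not_between P.add_mem P.mem 1 ?_ ?_;
   refine hRS.not_between P.add_mem P.add_sub_mem 1 ?_ ?_;
   refine hRS.not_between huv P.add_sub_mem 0 ?_ ?_;
   refine hRS.not_between P.mem P.sub_mem 1 ?_ ?_;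
   refine hRS.not_between P.add_mem P.add_sub_mem 1 ?_ ?_;
   refine hRS.not_between hv P.mem 0 ?_ ?_;
   refine hRS.not_between P.mem P.add_mem 1 ?_ ?_;
   refine hRS.not_between huv P.mem (-1) ?_ ?_;
   refine hRS.not_between P.sub_mem P.mem 1 ?_ ?_;
   refine hRS.not_between P.add_mem P.add_sub_mem 1 ?_ ?_;
   refine hRS.not_between P.add_mem P.add_sub_mem 1 ?_ ?_;
   refine hRS.not_between hv P.mem 0 ?_ ?_;
   refine hRS.not_between P.sub_mem P.mem 1 ?_ ?_] <;>
  · push_cast at hA hb hUk ⊢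
    simp only [map_add, map_sub, LinearMap.add_apply, LinearMap.sub_apply, hsu, hsv, hsvu]
    linarith

theorem inner_add_nonpos (hRS : IsRootSystem B Φ) (P : IsRootParallelogram Φ α u v)
    (hu : u ∈ Φ) (hv : v ∈ Φ) (huv : u + v ∈ Φ) (hU : 2 * B u v = -B u u) :
    2 * B u v = -B v v ∧ B α (u + v) ≤ 0 := by
  obtain ⟨n, hn⟩ := hRS.exists_two_mul_inner_eq hu hv
  obtain ⟨A, hA⟩ := hRS.exists_two_mul_inner_eq P.mem hu
  obtain ⟨b, hb⟩ := hRS.exists_two_mul_inner_eq P.mem hv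
  obtain ⟨hn1, hAb⟩ := P.cartan_eq_one hRS hu hv huv hU (k := -n) (by push_cast; linarith) hA hb
  have hV : 2 * B u v = -B v v := by rw [hn, show n = -1 by omega]; push_cast; ring
  have hUV : B u u = B v v := by linarith
  have hAb' : ((A + b : ℤ) : ℚ) * B v v ≤ 0 :=
    mul_nonpos_of_nonpos_of_nonneg (by exact_mod_cast hAb) (hRS.inner_self_pos hv).le
  refine ⟨hV, ?_⟩
  rw [hUV] at hA
  push_cast at hAb'
  simp only [map_add]
  linarith

theorem inner_add_eq_zero (hRS : IsRootSystem B Φ) (P : IsRootParallelogram Φ α u v)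
    (hu : u ∈ Φ) (hv : v ∈ Φ) (hne : u ≠ -v) (hneg : B u v < 0) :
    2 * B u v = -B u u ∧ 2 * B u v = -B v v ∧ B α (u + v) = 0 := by
  have huv := hRS.add_mem_of_neg hu hv hne hneg
  have hsvu := hRS.symm v u
  obtain ⟨hU, hV⟩ : 2 * B u v = -B u u ∧ 2 * B u v = -B v v := by
    rcases hRS.two_mul_inner_eq_neg_of_neg hu hv hne hneg with hU | hV
    · exact ⟨hU, (P.inner_add_nonpos hRS hu hv huv hU).1⟩
    · have := P.swap.inner_add_nonpos hRS hv hu (by rwa [add_comm]) (by rwa [hsvu])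
      exact ⟨by rw [← hsvu, this.1], hV⟩
  have hle := (P.inner_add_nonpos hRS hu hv huv hU).2
  have hge := ((P.neg hRS).inner_add_nonpos hRS hu hv huv hU).2
  simp only [map_neg, map_add, map_sub, LinearMap.neg_apply, LinearMap.add_apply,
    LinearMap.sub_apply, hsvu] at hle hge
  exact ⟨hU, hV, by simp only [map_add]; linarith⟩

theorem rootChain_eq_of_inner_neg (hRS : IsRootSystem B Φ) (P : IsRootParallelogram Φ α u v)
    (hu : u ∈ Φ) (hv : v ∈ Φ) (hne : u ≠ -v) (hneg : B u v < 0)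
    {p1 q1 p2 q2 p3 q3 p4 q4 : ℕ}
    (hc1 : RootChain Φ u (α - v) p1 q1) (hc2 : RootChain Φ v α p2 q2)
    (hc3 : RootChain Φ v (α + u) p3 q3) (hc4 : RootChain Φ u α p4 q4) :
    q1 = p3 ∧ q4 = p2 := by
  have huv := hRS.add_mem_of_neg hu hv hne hneg
  obtain ⟨hU, hV, hα⟩ := P.inner_add_eq_zero hRS hu hv hne hneg
  have hsvu := hRS.symm v u
  set s := hRS.reflection huv
  have hδ : B (u + v) (u + v) = B u u := by
    simp only [map_add, LinearMap.add_apply]; linear_combination hsvu + hV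
  have hsu : s u = -v := by
    rw [hRS.reflection_apply, hRS.pairingB_eq huv (n := 1) (by
      rw [hδ]; simp only [map_add]; linear_combination hU)]
    module
  have hsv : s v = -u := by
    rw [hRS.reflection_apply, hRS.pairingB_eq huv (n := 1) (by
      rw [hδ]; simp only [map_add]; linear_combination 2 * hsvu - hU + 2 * hV)]
    module
  have hsα : s α = α := by
    rw [hRS.reflection_apply, hRS.pairingB_eq huv (n := 0) (by rw [hα]; ring), zero_smul,
      sub_zero]
  have hmem : ∀ x, s x ∈ Φ ↔ x ∈ Φ := fun _ => hRS.reflection_mem_iff huv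
  have h1 := (hc1.map s hmem).neg
  have h4 := (hc4.map s hmem).neg
  rw [hsu, neg_neg, map_sub, hsα, hsv, sub_neg_eq_add] at h1
  rw [hsu, neg_neg, hsα] at h4
  exact ⟨(h1.unique hc3).1, (h4.unique hc2).1⟩

end IsRootParallelogram

theorem root_string_product_identity
    {I : Type*} [Fintype I]
    (B : E →ₗ[ℚ] E →ₗ[ℚ] ℚ) (Φ : Set E) (hRS : IsRootSystem B Φ)
    (a : I → E) (hbase : IsBase Φ a) {i j : I} (hij : i ≠ j)
    {α : E} (hα : α ∈ Φ)
    (h1 : α + a i ∈ Φ) (h2 : α - a j ∈ Φ) (h3 : α + a i - a j ∈ Φ)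
    (p1 q1 p2 q2 p3 q3 p4 q4 : ℕ)
    (hc1 : RootChain Φ (a i) (α - a j) p1 q1)
    (hc2 : RootChain Φ (a j) α p2 q2)
    (hc3 : RootChain Φ (a j) (α + a i) p3 q3)
    (hc4 : RootChain Φ (a i) α p4 q4) :
    (q1 + 1) * (p2 + 1) = (p3 + 1) * (q4 + 1) := by
  have hu := hbase.mem i
  have hv := hbase.mem j
  have hsub := hbase.sub_notMem hij
  have hle : B (a i) (a j) ≤ 0 := not_lt.mp fun hpos =>
    hsub (hRS.sub_mem_of_pos hu hv (hbase.indep.injective.ne hij) hpos)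
  rcases hle.lt_or_eq with hneg | horth
  · obtain ⟨h13, h42⟩ := IsRootParallelogram.rootChain_eq_of_inner_neg hRS ⟨hα, h1, h2, h3⟩ hu hv
      (hbase.ne_neg hij) hneg hc1 hc2 hc3 hc4
    rw [h13, h42]
  · obtain ⟨h14, h23⟩ := hRS.rootChain_eq_of_orthogonal hu hv horth hsub hc1 hc2 hc3 hc4
    rw [h14, h23, mul_comm]
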